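/- arXiv:1703.10527 — 4 statements merged into one kernel-verified Lean document; each statement's English description precedes it below -/
import Mathlib

section
/- For the Q2R rule in one dimension defined by s̲_{i,t+1} = s_{i,t} and s_{j,t+1} = s_{j-1,t} + s̲_{j,t} + s_{j+1,t} (mod 2), the state at time t > 0 satisfies s̲_{i,t} = Σ_{i' ∈ [i-(t-1), i+(t-1)]} ξ_{i'} (mod 2) and s_{j,t} = Σ_{j' ∈ [j-t, j+t]} ξ_{j'} (mod 2), where ξ denotes the initial spin configuration. -/
/-!
Write `W_r(j)` for the sum of `ξ` over `[j - r, j + r]`. The windows `[j - 1 - r, j - 1 + r]`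
and `[j + 1 - r, j + 1 + r]` have union `[j - r - 1, j + r + 1]` and intersection
`[j - r + 1, j + r - 1]`, so `W_r(j - 1) + W_r(j + 1) = W_{r+1}(j) + W_{r-1}(j)`. Modulo 2 this
is exactly the Q2R update with `s̲_t = W_{t-1}` and `s_t = W_t`, which closes the induction on `t`.
-/

open Finset

theorem Finset.sum_Icc_add_sum_Icc {α M : Type*} [LinearOrder α] [LocallyFiniteOrder α]
    [AddCommMonoid M] (f : α → M) {a b c d : α} (hab : a ≤ b) (hbc : b ≤ c) (hcd : c ≤ d) :
    ∑ x ∈ Icc a c, f x + ∑ x ∈ Icc b d, f x = ∑ x ∈ Icc a d, f x + ∑ x ∈ Icc b c, f x := by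
  classical
  have hunion : Icc a c ∪ Icc b d = Icc a d := by
    ext x
    simp only [mem_union, mem_Icc]
    grind
  have hinter : Icc a c ∩ Icc b d = Icc b c := by
    ext x
    simp only [mem_inter, mem_Icc]
    grind
  rw [← sum_union_inter, hunion, hinter]

noncomputable def windowSum {M : Type*} [AddCommMonoid M] (ξ : ℤ → M) (r j : ℤ) : M :=
  ∑ x ∈ Icc (j - r) (j + r), ξ x

section

variable {M : Type*} [AddCommMonoid M] (ξ : ℤ → M)

theorem windowSum_zero (j : ℤ) : windowSum ξ 0 j = ξ j := by
  simp [windowSum]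

theorem windowSum_one (j : ℤ) : windowSum ξ 1 j = ξ (j - 1) + ξ j + ξ (j + 1) := by
  have hIcc : Icc (j - 1) (j + 1) = {j - 1, j, j + 1} := by
    ext x
    simp only [mem_Icc, mem_insert, mem_singleton]
    omega
  rw [windowSum, hIcc, sum_insert (by simp; omega), sum_insert (by simp), sum_singleton, add_assoc]

theorem windowSum_sub_one_add_windowSum_add_one {r : ℤ} (hr : 1 ≤ r) (j : ℤ) :
    windowSum ξ r (j - 1) + windowSum ξ r (j + 1) =
      windowSum ξ (r + 1) j + windowSum ξ (r - 1) j := by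
  unfold windowSum
  convert sum_Icc_add_sum_Icc ξ (a := j - (r + 1)) (b := j - (r - 1)) (c := j - 1 + r)
    (d := j + (r + 1)) (by omega) (by omega) (by omega) using 4 <;> ring

end

theorem windowSum_add_one_of_charP_two {R : Type*} [Ring R] [CharP R 2] (ξ : ℤ → R) {r : ℤ}
    (hr : 1 ≤ r) (j : ℤ) :
    windowSum ξ r (j - 1) + windowSum ξ (r - 1) j + windowSum ξ r (j + 1) =
      windowSum ξ (r + 1) j := by
  rw [add_right_comm, windowSum_sub_one_add_windowSum_add_one ξ hr, add_assoc,
    CharTwo.add_self_eq_zero, add_zero]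

/-- For the one-dimensional Q2R rule `s̲_{i,t+1} = s_{i,t}`,
`s_{j,t+1} = s_{j-1,t} + s̲_{j,t} + s_{j+1,t} (mod 2)`, the state at time `t > 0` satisfies
`s̲_{i,t} = ∑_{i' ∈ [i-(t-1), i+(t-1)]} ξ_{i'}` and `s_{j,t} = ∑_{j' ∈ [j-t, j+t]} ξ_{j'}`
(mod 2), where `ξ` is the initial spin configuration. -/
theorem stmt_4 (ξ : ℤ → ZMod 2) (u q : ℕ → ℤ → ZMod 2)
    (h0u : ∀ i, u 0 i = ξ i) (h0q : ∀ i, q 0 i = ξ i)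
    (hu : ∀ t i, u (t + 1) i = q t i)
    (hq : ∀ t j, q (t + 1) j = q t (j - 1) + u t j + q t (j + 1)) :
    ∀ t : ℕ, 0 < t →
      (∀ i : ℤ, u t i = ∑ i' ∈ Finset.Icc (i - ((t : ℤ) - 1)) (i + ((t : ℤ) - 1)), ξ i') ∧
      (∀ j : ℤ, q t j = ∑ j' ∈ Finset.Icc (j - (t : ℤ)) (j + (t : ℤ)), ξ j') := by
  suffices h : ∀ t : ℕ, 0 < t → u t = windowSum ξ ((t : ℤ) - 1) ∧ q t = windowSum ξ t from
    fun t ht => ⟨fun i => congrFun (h t ht).1 i, fun j => congrFun (h t ht).2 j⟩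
  intro t ht
  induction t, ht using Nat.le_induction with
  | base =>
    refine ⟨funext fun i => ?_, funext fun j => ?_⟩
    · rw [hu, h0q, Nat.cast_one, sub_self, windowSum_zero]
    · rw [hq, h0q, h0u, h0q, Nat.cast_one, windowSum_one]
  | succ t ht ih =>
    have hr : (1 : ℤ) ≤ t := by exact_mod_cast ht
    refine ⟨funext fun i => ?_, funext fun j => ?_⟩
    · rw [hu, ih.2, Nat.cast_succ, add_sub_cancel_right]
    · rw [hq, ih.1, ih.2, Nat.cast_succ, windowSum_add_one_of_charP_two ξ hr]
end

section
/- Define k_3(t) = -S[P^(2t+1)]/2 + S[P^(2t-1)] - S[P^(2t-3)]/2 for t > 1. Then k_3(t) ≥ 0 for all t > 1 and k_3(t) → 0 exponentially as t → ∞, for any fixed 0 < p < 1/2. -/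
/-!
With `x = 1 - 2p`, the block entropies are `h n = H((1 - xⁿ)/2)` for the binary entropy `H`,
and `k₃(t)` is minus the second difference `h(n+4)/2 - h(n+2) + h(n)/2` at `n = 2t - 3`.
On `[0, 1/2]` the entropy `H` is concave and increasing, and the middle argument
`(1 - xⁿ⁺²)/2` dominates the mean of the outer two (as `2x² ≤ 1 + x⁴`), so the second difference
is nonpositive. Conversely `k₃(t) ≤ (log 2 - h n)/2`, and the chord of `H` from `0` to `1/2`
gives `log 2 - H(q) ≤ (1 - 2q) log 2 = xⁿ log 2`, which decays like `(x²)ᵗ`.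
-/

open Real Set

lemma ConcaveOn.add_div_two_le_of_monotoneOn {s : Set ℝ} {g : ℝ → ℝ}
    (hg : ConcaveOn ℝ s g) (hmono : MonotoneOn g s) {a b c : ℝ}
    (ha : a ∈ s) (hb : b ∈ s) (hc : c ∈ s) (hmid : (a + c) / 2 ≤ b) :
    (g a + g c) / 2 ≤ g b := by
  have hweights : (2⁻¹ : ℝ) + 2⁻¹ = 1 := by norm_num
  have hcomb : (2⁻¹ : ℝ) • a + (2⁻¹ : ℝ) • c = (a + c) / 2 := by
    simp only [smul_eq_mul]; ring
  have hmid_mem : (a + c) / 2 ∈ s := hcomb ▸ hg.1 ha hc (by norm_num) (by norm_num) hweights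
  calc (g a + g c) / 2 = (2⁻¹ : ℝ) • g a + (2⁻¹ : ℝ) • g c := by simp only [smul_eq_mul]; ring
    _ ≤ g ((a + c) / 2) := hcomb ▸ hg.2 ha hc (by norm_num) (by norm_num) hweights
    _ ≤ g b := hmono hmid_mem hb hmid

namespace Real

lemma binEntropy_eq_neg_mul_log_sub (q : ℝ) :
    binEntropy q = -q * log q - (1 - q) * log (1 - q) := by
  rw [binEntropy, log_inv, log_inv]
  ring

lemma two_mul_mul_log_two_le_binEntropy {q : ℝ} (hq : q ∈ Icc (0 : ℝ) 2⁻¹) :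
    2 * q * log 2 ≤ binEntropy q := by
  have hchord := strictConcave_binEntropy.concaveOn.2
    (⟨by norm_num, by norm_num⟩ : (2⁻¹ : ℝ) ∈ Icc 0 1) (⟨le_rfl, zero_le_one⟩ : (0 : ℝ) ∈ Icc 0 1)
    (by linarith [hq.1] : 0 ≤ 2 * q) (by linarith [hq.2] : 0 ≤ 1 - 2 * q) (by ring)
  simp only [smul_eq_mul, binEntropy_two_inv, binEntropy_zero, mul_zero, add_zero] at hchord
  rwa [show 2 * q * 2⁻¹ = q by ring] at hchord

end Real

/-- `S[P^(n)]` with `x = 1 - 2p`: the entropy of the parity of `n` independent `p`-flips. -/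
noncomputable def parityEntropy (x : ℝ) (n : ℕ) : ℝ := Real.binEntropy ((1 - x ^ n) / 2)

section parityEntropy

variable {x : ℝ} (hx0 : 0 ≤ x) (hx1 : x ≤ 1)
include hx0 hx1

lemma one_sub_pow_div_two_mem_Icc (n : ℕ) : (1 - x ^ n) / 2 ∈ Icc (0 : ℝ) 2⁻¹ := by
  have := pow_nonneg hx0 n
  have := pow_le_one₀ hx0 hx1 (n := n)
  constructor <;> linarith

lemma parityEntropy_second_difference_nonneg (n : ℕ) :
    0 ≤ -parityEntropy x (n + 4) / 2 + parityEntropy x (n + 2) - parityEntropy x n / 2 := by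
  have hmid : ((1 - x ^ (n + 4)) / 2 + (1 - x ^ n) / 2) / 2 ≤ (1 - x ^ (n + 2)) / 2 := by
    have : 0 ≤ x ^ n * (x ^ 2 - 1) ^ 2 := by positivity
    nlinarith [pow_add x n 2, pow_add x n 4]
  have := (strictConcave_binEntropy.concaveOn.subset (Icc_subset_Icc_right (by norm_num))
    (convex_Icc _ _)).add_div_two_le_of_monotoneOn binEntropy_strictMonoOn.monotoneOn
    (one_sub_pow_div_two_mem_Icc hx0 hx1 _) (one_sub_pow_div_two_mem_Icc hx0 hx1 _)
    (one_sub_pow_div_two_mem_Icc hx0 hx1 _) hmid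
  unfold parityEntropy
  linarith

lemma parityEntropy_second_difference_le (n : ℕ) :
    -parityEntropy x (n + 4) / 2 + parityEntropy x (n + 2) - parityEntropy x n / 2
      ≤ log 2 / 2 * x ^ n := by
  have hmono : parityEntropy x (n + 2) ≤ parityEntropy x (n + 4) := by
    refine binEntropy_strictMonoOn.monotoneOn (one_sub_pow_div_two_mem_Icc hx0 hx1 _)
      (one_sub_pow_div_two_mem_Icc hx0 hx1 _) ?_
    have := pow_le_pow_of_le_one hx0 hx1 (by omega : n + 2 ≤ n + 4)
    linarith
  have hlow := two_mul_mul_log_two_le_binEntropy (one_sub_pow_div_two_mem_Icc hx0 hx1 n)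
  have hmax : parityEntropy x (n + 2) ≤ log 2 := binEntropy_le_log_two
  unfold parityEntropy at *
  linarith

end parityEntropy

/-- Define `k_3(t) = -S[P^(2t+1)]/2 + S[P^(2t-1)] - S[P^(2t-3)]/2` for `t > 1`. Then
`k_3(t) ≥ 0` for all `t > 1` and `k_3(t) → 0` exponentially as `t → ∞`,
for any fixed `0 < p < 1/2`. -/
theorem stmt_15 (p : ℝ) (hp0 : 0 < p) (hp : p < 1 / 2)
    (f : ℕ → ℝ) (hf : ∀ n, f n = (1 - (1 - 2 * p) ^ n) / 2)
    (S : ℝ → ℝ) (hS : ∀ q, S q = -q * Real.log q - (1 - q) * Real.log (1 - q))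
    (k3 : ℕ → ℝ)
    (hk3 : ∀ t, 1 < t →
        k3 t = -S (f (2 * t + 1)) / 2 + S (f (2 * t - 1)) - S (f (2 * t - 3)) / 2) :
    (∀ t, 1 < t → 0 ≤ k3 t) ∧
      ∃ C > 0, ∃ r : ℝ, 0 < r ∧ r < 1 ∧ ∀ t, 1 < t → |k3 t| ≤ C * r ^ t := by
  set x := 1 - 2 * p
  have hx0 : 0 < x := by linarith
  have hx1 : x < 1 := by linarith
  have hk3_eq : ∀ t, 1 < t → k3 t = -parityEntropy x (2 * t - 3 + 4) / 2
      + parityEntropy x (2 * t - 3 + 2) - parityEntropy x (2 * t - 3) / 2 := by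
    intro t ht
    rw [hk3 t ht, show 2 * t + 1 = 2 * t - 3 + 4 by omega, show 2 * t - 1 = 2 * t - 3 + 2 by omega]
    simp only [parityEntropy, hf, hS, binEntropy_eq_neg_mul_log_sub]
  have hnonneg : ∀ t, 1 < t → 0 ≤ k3 t := fun t ht =>
    hk3_eq t ht ▸ parityEntropy_second_difference_nonneg hx0.le hx1.le _
  refine ⟨hnonneg, log 2 / 2 / x ^ 3, by positivity, x ^ 2, by positivity,
    pow_lt_one₀ hx0.le hx1 two_ne_zero, fun t ht => ?_⟩
  have hpow : (x ^ 2) ^ t = x ^ 3 * x ^ (2 * t - 3) := by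
    rw [← pow_mul, ← pow_add]; congr 1; omega
  have hbound : log 2 / 2 / x ^ 3 * (x ^ 2) ^ t = log 2 / 2 * x ^ (2 * t - 3) := by
    rw [hpow]; field_simp
  rw [abs_of_nonneg (hnonneg t ht), hk3_eq t ht, hbound]
  exact parityEntropy_second_difference_le hx0.le hx1.le _
end

section
/- Suppose k_2(t) = S[P^(2t+1)] - S[P^(2)] + log 2 for t ≥ 1, k_3(t) = -S[P^(2t+1)]/2 + S[P^(2t-1)] - S[P^(2t-3)]/2 for t > 1 with k_3(1) = -S[P^(3)]/2 + S[P^(2)] - S[P^(1)]/2, k_{2m+1}(t) = k_3(t-m+1) for 1 ≤ m ≤ t, and k_{2m}(t) = 0 for m ≥ 2. Then the excess entropy η(t) = k_2(t) + Σ_{m=1}^{t} 2m · k_{2m+1}(t) satisfies η(t) = (2t-1)ζ + log 2 for all t ≥ 1, where ζ = S[P^(2)] - S[P^(1)]. -/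
/-!
Every `k_{2m+1}(t)` is a shifted copy of `k_3`, so `η(t) - k_2(t)` is a weighted sum
`∑ j, 2 (t - j) k_3(j + 1)`. Writing `k_3(j + 1)` as half a backward difference of the increments
of `S[P^(n)]` along odd `n`, the weighted sum telescopes twice, leaving `2tζ + S[P^(1)] - S[P^(2t+1)]`;
the term `S[P^(2t+1)]` then cancels against the one in `k_2(t)`.
-/

open Finset

theorem sum_range_cast_sub_mul_sub_succ {R : Type*} [CommRing R] (g : ℕ → R) (n : ℕ) :
    ∑ j ∈ range n, ((n : R) - j) * (g j - g (j + 1)) = ∑ j ∈ range n, (g 0 - g (j + 1)) := by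
  induction n with
  | zero => simp
  | succ n ih =>
    have hshift : ∑ j ∈ range n, (((n + 1 : ℕ) : R) - j) * (g j - g (j + 1))
        = ∑ j ∈ range n, ((n : R) - j) * (g j - g (j + 1)) + (g 0 - g n) := by
      rw [← sum_range_sub', ← sum_add_distrib]
      refine sum_congr rfl fun j _ => ?_
      push_cast
      ring
    rw [sum_range_succ, hshift, ih, sum_range_succ]
    push_cast
    ring

theorem sum_Icc_cast_mul_sub_add_one {R : Type*} [CommRing R] (a : ℕ → R) (n : ℕ) :
    ∑ m ∈ Icc 1 n, (m : R) * a (n - m + 1) = ∑ j ∈ range n, ((n : R) - j) * a (j + 1) := by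
  rw [← Ico_add_one_right_eq_Icc, sum_Ico_eq_sum_range, Nat.add_sub_cancel, ← sum_range_reflect]
  refine sum_congr rfl fun j hj => ?_
  have hj : j < n := mem_range.mp hj
  have hcount : 1 + (n - 1 - j) = n - j := by omega
  have hindex : n - (n - j) + 1 = j + 1 := by omega
  rw [hcount, hindex, Nat.cast_sub hj.le]

/-- The value at `0` is chosen so that the boundary formula for `k_3(1)` becomes the `j = 0` case
of `eq_half_oddIncrement_sub_succ`. -/
def oddIncrement (s : ℕ → ℝ) : ℕ → ℝ
  | 0 => 2 * (s 2 - s 1)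
  | j + 1 => s (2 * j + 3) - s (2 * j + 1)

theorem sum_range_oddIncrement_succ (s : ℕ → ℝ) (n : ℕ) :
    ∑ j ∈ range n, oddIncrement s (j + 1) = s (2 * n + 1) - s 1 :=
  sum_range_sub (fun i => s (2 * i + 1)) n

section ShiftedCopies

variable (s a : ℕ → ℝ) (ha1 : a 1 = -s 3 / 2 + s 2 - s 1 / 2)
  (ha : ∀ t, 1 < t → a t = -s (2 * t + 1) / 2 + s (2 * t - 1) - s (2 * t - 3) / 2)
include ha1 ha

theorem eq_half_oddIncrement_sub_succ (j : ℕ) :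
    a (j + 1) = (oddIncrement s j - oddIncrement s (j + 1)) / 2 := by
  cases j with
  | zero =>
    simp only [oddIncrement, ha1]
    ring
  | succ j =>
    rw [ha (j + 2) (by omega)]
    simp only [oddIncrement, show 2 * (j + 2) + 1 = 2 * (j + 1) + 3 by ring,
      show 2 * (j + 2) - 1 = 2 * j + 3 by omega, show 2 * (j + 2) - 3 = 2 * j + 1 by omega,
      show 2 * (j + 1) + 1 = 2 * j + 3 by ring]
    ring

theorem sum_Icc_two_mul_mul_sub_add_one (n : ℕ) :
    ∑ m ∈ Icc 1 n, (2 * m : ℝ) * a (n - m + 1) = 2 * n * (s 2 - s 1) + s 1 - s (2 * n + 1) := by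
  have hdiff : ∀ j ∈ range n, ((n : ℝ) - j) * (2 * a (j + 1))
      = ((n : ℝ) - j) * (oddIncrement s j - oddIncrement s (j + 1)) := fun j _ => by
    rw [eq_half_oddIncrement_sub_succ s a ha1 ha j]
    ring
  calc ∑ m ∈ Icc 1 n, (2 * m : ℝ) * a (n - m + 1)
      = ∑ j ∈ range n, ((n : ℝ) - j) * (2 * a (j + 1)) := by
        simp_rw [mul_left_comm _ (2 : ℝ), ← mul_sum, mul_assoc, ← mul_sum,
          sum_Icc_cast_mul_sub_add_one]
    _ = ∑ j ∈ range n, (oddIncrement s 0 - oddIncrement s (j + 1)) := by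
        rw [sum_congr rfl hdiff, sum_range_cast_sub_mul_sub_succ]
    _ = 2 * n * (s 2 - s 1) + s 1 - s (2 * n + 1) := by
        rw [sum_sub_distrib, sum_range_oddIncrement_succ, sum_const, card_range, nsmul_eq_mul]
        simp only [oddIncrement]
        ring

end ShiftedCopies

theorem stmt_16_general
    (f : ℕ → ℝ)
    (S : ℝ → ℝ)
    (k : ℕ → ℕ → ℝ) (η : ℕ → ℝ)
    (hk2 : ∀ t, 1 ≤ t → k 2 t = S (f (2 * t + 1)) - S (f 2) + Real.log 2)
    (hk31 : k 3 1 = -S (f 3) / 2 + S (f 2) - S (f 1) / 2)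
    (hk3 : ∀ t, 1 < t →
        k 3 t = -S (f (2 * t + 1)) / 2 + S (f (2 * t - 1)) - S (f (2 * t - 3)) / 2)
    (hodd : ∀ m t, 1 ≤ m → m ≤ t → k (2 * m + 1) t = k 3 (t - m + 1))
    (hη : ∀ t, η t = k 2 t + ∑ m ∈ Finset.Icc 1 t, (2 * m : ℝ) * k (2 * m + 1) t) :
    ∀ t, 1 ≤ t → η t = (2 * (t : ℝ) - 1) * (S (f 2) - S (f 1)) + Real.log 2 := by
  intro t ht
  have hshift : ∀ m ∈ Icc 1 t, (2 * m : ℝ) * k (2 * m + 1) t = (2 * m : ℝ) * k 3 (t - m + 1) :=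
    fun m hm => by rw [hodd m t (mem_Icc.mp hm).1 (mem_Icc.mp hm).2]
  rw [hη t, sum_congr rfl hshift,
    sum_Icc_two_mul_mul_sub_add_one (fun n => S (f n)) (k 3) hk31 hk3 t, hk2 t ht]
  ring

/-- Under the stated structure of the correlation information terms of the Q2R model,
the excess entropy `η(t) = k_2(t) + Σ_{m=1}^t 2m·k_{2m+1}(t)` satisfies
`η(t) = (2t-1)ζ + log 2` for all `t ≥ 1`, where `ζ = S[P^(2)] - S[P^(1)]`. -/
theorem stmt_16 (p : ℝ) (hp0 : 0 < p) (hp : p < 1 / 2)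
    (f : ℕ → ℝ) (hf : ∀ n, f n = (1 - (1 - 2 * p) ^ n) / 2)
    (S : ℝ → ℝ) (hS : ∀ q, S q = -q * Real.log q - (1 - q) * Real.log (1 - q))
    (k : ℕ → ℕ → ℝ) (η : ℕ → ℝ)
    (hk2 : ∀ t, 1 ≤ t → k 2 t = S (f (2 * t + 1)) - S (f 2) + Real.log 2)
    (hk31 : k 3 1 = -S (f 3) / 2 + S (f 2) - S (f 1) / 2)
    (hk3 : ∀ t, 1 < t →
        k 3 t = -S (f (2 * t + 1)) / 2 + S (f (2 * t - 1)) - S (f (2 * t - 3)) / 2)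
    (hodd : ∀ m t, 1 ≤ m → m ≤ t → k (2 * m + 1) t = k 3 (t - m + 1))
    (heven : ∀ m t, 2 ≤ m → k (2 * m) t = 0)
    (hη : ∀ t, η t = k 2 t + ∑ m ∈ Finset.Icc 1 t, (2 * m : ℝ) * k (2 * m + 1) t) :
    ∀ t, 1 ≤ t → η t = (2 * (t : ℝ) - 1) * (S (f 2) - S (f 1)) + Real.log 2 :=
  stmt_16_general f S k η hk2 hk31 hk3 hodd hη
end

section
/- For 0 < p < 1/2, among distributions on {↑,↓}² that are symmetric, have marginal {q, 1-q} on each coordinate, and satisfy p(↑↓)+p(↓↑) = 2p(1-p) (energy constraint), the entropy H_2 - H_1 of the induced stationary Markov chain is maximized when q = 1/2, and the maximal entropy rate equals S[{2p(1-p), 1-2p(1-p)}]. -/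
open Real Set

lemma concaveF (r : ℝ) (hr : 0 < r) :
    ConcaveOn ℝ (Set.Ici 0) (fun x => Real.negMulLog x - Real.negMulLog (x + r)) := by
  apply concaveOn_of_hasDerivWithinAt2_nonpos (f' := fun x => Real.log (x + r) - Real.log x)
    (f'' := fun x => (x + r)⁻¹ - x⁻¹) (convex_Ici 0)
  · fun_prop
  · intro x hx
    rw [interior_Ici, mem_Ioi] at hx
    have hx0 : x ≠ 0 := ne_of_gt hx
    have hxr : x + r ≠ 0 := ne_of_gt (by linarith)
    have h1 := Real.hasDerivAt_negMulLog hx0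
    have h2 := (Real.hasDerivAt_negMulLog hxr).comp x ((hasDerivAt_id x).add_const r)
    have h3 := h1.sub h2
    have : (-Real.log x - 1) - (-Real.log (x + r) - 1) * 1 = Real.log (x + r) - Real.log x := by
      ring
    rw [this] at h3
    exact h3.hasDerivWithinAt
  · intro x hx
    rw [interior_Ici, mem_Ioi] at hx
    have hx0 : x ≠ 0 := ne_of_gt hx
    have hxr : x + r ≠ 0 := ne_of_gt (by linarith)
    have h1 := (Real.hasDerivAt_log hxr).comp x ((hasDerivAt_id x).add_const r)
    have h2 := Real.hasDerivAt_log hx0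
    have h3 := h1.sub h2
    have : (x + r)⁻¹ * 1 - x⁻¹ = (x + r)⁻¹ - x⁻¹ := by ring
    rw [this] at h3
    exact h3.hasDerivWithinAt
  · intro x hx
    rw [interior_Ici, mem_Ioi] at hx
    have : (x + r)⁻¹ ≤ x⁻¹ := inv_anti₀ hx (by linarith)
    linarith

lemma identR (r : ℝ) (hr : 0 < r) (hr2 : 2 * r < 1) :
    2 * Real.negMulLog (1/2 - r) + 2 * Real.negMulLog r - 2 * Real.negMulLog (1/2)
      = Real.negMulLog (2 * r) + Real.negMulLog (1 - 2 * r) := by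
  have h1 : (1/2 - r : ℝ) = (1 - 2*r) / 2 := by ring
  have h2 : Real.log ((1 - 2*r)/2) = Real.log (1 - 2*r) - Real.log 2 :=
    Real.log_div (by linarith) two_ne_zero
  have h3 : Real.log (2 * r) = Real.log 2 + Real.log r :=
    Real.log_mul two_ne_zero hr.ne'
  have h4 : Real.log (1/2 : ℝ) = - Real.log 2 := by
    rw [show (1/2 : ℝ) = 2⁻¹ by norm_num, Real.log_inv]
  simp only [Real.negMulLog, h1, h2, h3, h4]
  ring

/-- Among symmetric pair distributions on `{↑,↓}²` with marginal `{q, 1-q}` and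
anti-parallel probability `2p(1-p)` (energy constraint), the entropy rate `H_2 - H_1`
is maximized when `q = 1/2`, and the maximal entropy rate equals
`S[{2p(1-p), 1-2p(1-p)}]`. -/
theorem stmt_18 (p : ℝ) (hp0 : 0 < p) (hp : p < 1 / 2) (SEq : ℝ)
    (hSEq : SEq = Real.negMulLog (2 * p * (1 - p)) + Real.negMulLog (1 - 2 * p * (1 - p))) :
    (∀ (q : ℝ) (P : Bool → Bool → ℝ),
        (∀ a b, 0 ≤ P a b) →
        (∀ a b, P a b = P b a) →
        (∑ a : Bool, ∑ b : Bool, P a b) = 1 →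
        (∑ b : Bool, P true b) = q →
        P true false + P false true = 2 * p * (1 - p) →
        (∑ a : Bool, ∑ b : Bool, Real.negMulLog (P a b))
            - (Real.negMulLog q + Real.negMulLog (1 - q)) ≤ SEq) ∧
      ∃ P : Bool → Bool → ℝ,
        (∀ a b, 0 ≤ P a b) ∧ (∀ a b, P a b = P b a) ∧
        (∑ a : Bool, ∑ b : Bool, P a b) = 1 ∧
        (∑ b : Bool, P true b) = 1 / 2 ∧
        P true false + P false true = 2 * p * (1 - p) ∧
        (∑ a : Bool, ∑ b : Bool, Real.negMulLog (P a b))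
            - (Real.negMulLog (1 / 2 : ℝ) + Real.negMulLog (1 - 1 / 2 : ℝ)) = SEq := by
  set r : ℝ := p * (1 - p) with hrdef
  have hr : 0 < r := mul_pos hp0 (by linarith)
  have hr2 : 2 * r < 1 := by nlinarith
  have h2r : 2 * p * (1 - p) = 2 * r := by rw [hrdef]; ring
  have hident := identR r hr hr2
  constructor
  · intro q P hpos hsym hsum hmarg hE
    simp only [Fintype.sum_bool] at hsum hmarg ⊢
    have hft : P false true = P true false := hsym false true
    have hPtf : P true false = r := by rw [h2r] at hE; linarith
    set a := P true true with ha
    set b := P false false with hb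
    have ha0 : 0 ≤ a := hpos true true
    have hb0 : 0 ≤ b := hpos false false
    have hq : q = a + r := by rw [← hmarg, hPtf]
    have hab : a + b = 1 - 2 * r := by rw [hPtf, hft, hPtf] at hsum; linarith
    have h1q : 1 - q = b + r := by rw [hq]; linarith
    rw [hq, hft, hPtf, show (1 - (a + r) : ℝ) = b + r from by linarith]
    have hcon := (concaveF r hr).2 (mem_Ici.mpr ha0) (mem_Ici.mpr hb0)
      (by norm_num : (0:ℝ) ≤ 1/2) (by norm_num : (0:ℝ) ≤ 1/2) (by norm_num)
    simp only [smul_eq_mul] at hcon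
    have hmid : (1/2 : ℝ) * a + (1/2) * b = 1/2 - r := by linarith
    rw [hmid, show (1/2 - r + r : ℝ) = 1/2 by ring] at hcon
    rw [hSEq, h2r]
    linarith
  · refine ⟨fun a b => if a = b then 1/2 - r else r, ?_, ?_, ?_, ?_, ?_, ?_⟩
    · intro a b; dsimp only; split <;> linarith
    · intro a b; dsimp only; rcases a <;> rcases b <;> simp
    · simp only [Fintype.sum_bool]; norm_num
    · simp only [Fintype.sum_bool]; norm_num
    · dsimp only; rw [h2r]; norm_num; ring
    · simp only [Fintype.sum_bool]
      norm_num
      rw [hSEq, h2r]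
      linarith
end
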